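/- Let C > 0 and let v : {τ ∈ ℂ : Im τ ≤ 0} → ℂ be a continuous function which is holomorphic on the open half-plane {τ ∈ ℂ : Im τ < 0} and satisfies |v(τ)| ≤ C (1 + |τ|)^{−2} for every τ with Im τ ≤ 0. Then for every real t < 0 one has ∫_ℝ e^{itτ} v(τ) dτ = 0. -/

import Mathlib

open MeasureTheory
open Filter intervalIntegral Complex Set

noncomputable section

/-- Paley–Wiener-type vanishing: if `v` is continuous on the closed lower half-plane,
holomorphic on the open lower half-plane, and decays like `(1+|τ|)⁻²`, then
`∫_ℝ e^{itτ} v(τ) dτ = 0` for every `t < 0`. -/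
theorem paleyWiener_vanishing (C : ℝ) (hC : 0 < C) (v : ℂ → ℂ)
    (hv_cont : ContinuousOn v {τ : ℂ | τ.im ≤ 0})
    (hv_holo : DifferentiableOn ℂ v {τ : ℂ | τ.im < 0})
    (hv_decay : ∀ τ : ℂ, τ.im ≤ 0 → ‖v τ‖ ≤ C * (1 + ‖τ‖) ^ (-2 : ℤ)) :
    ∀ t : ℝ, t < 0 →
      ∫ τ : ℝ, Complex.exp (Complex.I * (t : ℂ) * (τ : ℂ)) * v (τ : ℂ) = 0 := by
  intro t ht
  set f : ℂ → ℂ := fun z => Complex.exp (Complex.I * (t : ℂ) * z) * v z with hfdef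
  -- norm of the exponential factor
  have hexp : ∀ z : ℂ, ‖Complex.exp (Complex.I * (t : ℂ) * z)‖ = Real.exp (-(t * z.im)) := by
    intro z
    rw [Complex.norm_exp]
    congr 1
    simp [Complex.mul_re, Complex.mul_im]
  -- pointwise bound on the closed half-plane
  have hbound : ∀ (x y : ℝ), y ≤ 0 →
      ‖f ((x : ℂ) + (y : ℂ) * I)‖ ≤ Real.exp (-(t * y)) * (C * (1 + x ^ 2)⁻¹) := by
    intro x y hy
    have him : ((x : ℂ) + (y : ℂ) * I).im = y := by simp
    have hre : ((x : ℂ) + (y : ℂ) * I).re = x := by simp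
    have h1 := hv_decay _ (by rw [him]; exact hy)
    have hax : |x| ≤ ‖(x : ℂ) + (y : ℂ) * I‖ := by
      simpa [hre] using Complex.abs_re_le_norm ((x : ℂ) + (y : ℂ) * I)
    have h2 : (1 + ‖(x : ℂ) + (y : ℂ) * I‖) ^ (-2 : ℤ) ≤ (1 + x ^ 2)⁻¹ := by
      rw [zpow_neg]
      have hpos : (0 : ℝ) < 1 + x ^ 2 := by positivity
      have hle : 1 + x ^ 2 ≤ (1 + ‖(x : ℂ) + (y : ℂ) * I‖) ^ (2 : ℤ) := by
        rw [zpow_two]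
        nlinarith [abs_nonneg x, _root_.sq_abs x, norm_nonneg ((x : ℂ) + (y : ℂ) * I)]
      exact inv_anti₀ hpos hle
    have h3 : ‖v ((x : ℂ) + (y : ℂ) * I)‖ ≤ C * (1 + x ^ 2)⁻¹ :=
      h1.trans (by nlinarith)
    calc ‖f ((x : ℂ) + (y : ℂ) * I)‖
        = Real.exp (-(t * y)) * ‖v ((x : ℂ) + (y : ℂ) * I)‖ := by
          rw [hfdef]; simp only [norm_mul, hexp, him]
      _ ≤ Real.exp (-(t * y)) * (C * (1 + x ^ 2)⁻¹) := by
          exact mul_le_mul_of_nonneg_left h3 (Real.exp_nonneg _)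
  -- continuity of f on the closed half-plane
  have hf_cont : ContinuousOn f {z : ℂ | z.im ≤ 0} := by
    apply ContinuousOn.mul _ hv_cont
    exact (Complex.continuous_exp.comp (by continuity)).continuousOn
  -- holomorphy on the open half-plane
  have hf_diff : DifferentiableOn ℂ f {z : ℂ | z.im < 0} := by
    apply DifferentiableOn.mul _ hv_holo
    exact (Complex.differentiable_exp.comp
      ((differentiable_const _).mul differentiable_id)).differentiableOn
  -- integrability on each horizontal line in the closed half-plane
  have hInt : ∀ y : ℝ, y ≤ 0 → Integrable (fun x : ℝ => f ((x : ℂ) + (y : ℂ) * I)) := by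
    intro y hy
    have hmap : ∀ x : ℝ, ((x : ℂ) + (y : ℂ) * I) ∈ {z : ℂ | z.im ≤ 0} := fun x => by
      simp [hy]
    have hcont : Continuous fun x : ℝ => f ((x : ℂ) + (y : ℂ) * I) :=
      hf_cont.comp_continuous (by continuity) hmap
    refine Integrable.mono'
      (((integrable_inv_one_add_sq.const_mul C).const_mul (Real.exp (-(t * y)))))
      hcont.aestronglyMeasurable ?_
    exact Filter.Eventually.of_forall fun x => hbound x y hy
  -- the rectangle contour identity
  have hrect : ∀ A R : ℝ, 0 ≤ R →
      (∫ x in -A..A, f ((x : ℂ) + ((-R : ℝ) : ℂ) * I))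
        - (∫ x in -A..A, f ((x : ℂ) + ((0 : ℝ) : ℂ) * I))
        + I • (∫ y in (-R)..0, f ((A : ℂ) + (y : ℂ) * I))
        - I • (∫ y in (-R)..0, f (((-A : ℝ) : ℂ) + (y : ℂ) * I)) = 0 := by
    intro A R hR
    have h := Complex.integral_boundary_rect_eq_zero_of_continuousOn_of_differentiableOn f
      ⟨-A, -R⟩ ⟨A, 0⟩ ?_ ?_
    · simpa using h
    · apply hf_cont.mono
      rintro z ⟨-, hz2⟩
      simp only [Set.uIcc_of_le (by linarith : (-R : ℝ) ≤ 0), Set.mem_Icc] at hz2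
      exact hz2.2
    · apply hf_diff.mono
      rintro z ⟨-, hz2⟩
      simp only [Set.mem_Ioo] at hz2
      have := hz2.2
      have hmax : max (-R) (0:ℝ) = 0 := max_eq_right (by linarith)
      simpa [hmax] using this
  -- side integrals vanish as A → ∞ (R fixed)
  have hside : ∀ R : ℝ, 0 ≤ R → ∀ a : ℝ,
      ‖∫ y in (-R)..0, f ((a : ℂ) + (y : ℂ) * I)‖ ≤ C * ((1 + |a|) ^ 2)⁻¹ * R := by
    intro R hR a
    have key : ∀ y ∈ Set.uIoc (-R) (0 : ℝ),
        ‖f ((a : ℂ) + (y : ℂ) * I)‖ ≤ C * ((1 + |a|) ^ 2)⁻¹ := by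
      intro y hy
      rw [Set.uIoc_of_le (by linarith : (-R : ℝ) ≤ 0)] at hy
      have hy0 : y ≤ 0 := hy.2
      have h1 := hv_decay ((a : ℂ) + (y : ℂ) * I) (by simp [hy0])
      have hexp1 : Real.exp (-(t * y)) ≤ 1 :=
        Real.exp_le_one_iff.mpr (by nlinarith)
      have haa : |a| ≤ ‖(a : ℂ) + (y : ℂ) * I‖ := by
        simpa using Complex.abs_re_le_norm ((a : ℂ) + (y : ℂ) * I)
      have h2 : (1 + ‖(a : ℂ) + (y : ℂ) * I‖) ^ (-2 : ℤ) ≤ ((1 + |a|) ^ 2)⁻¹ := by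
        rw [zpow_neg]
        apply inv_anti₀ (by positivity)
        rw [zpow_two]
        nlinarith [abs_nonneg a, norm_nonneg ((a : ℂ) + (y : ℂ) * I)]
      have him : ((a : ℂ) + (y : ℂ) * I).im = y := by simp
      calc ‖f ((a : ℂ) + (y : ℂ) * I)‖
          = Real.exp (-(t * y)) * ‖v ((a : ℂ) + (y : ℂ) * I)‖ := by
            rw [hfdef]; simp only [norm_mul, hexp, him]
        _ ≤ 1 * (C * ((1 + |a|) ^ 2)⁻¹) := by
            apply mul_le_mul hexp1 (h1.trans ?_) (norm_nonneg _) zero_le_one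
            exact mul_le_mul_of_nonneg_left h2 hC.le
        _ = C * ((1 + |a|) ^ 2)⁻¹ := one_mul _
    have := intervalIntegral.norm_integral_le_of_norm_le_const key
    calc ‖∫ y in (-R)..0, f ((a : ℂ) + (y : ℂ) * I)‖
        ≤ C * ((1 + |a|) ^ 2)⁻¹ * |0 - (-R)| := this
      _ = C * ((1 + |a|) ^ 2)⁻¹ * R := by
          have : |(0 : ℝ) - -R| = R := by
            rw [zero_sub, abs_neg, abs_neg, _root_.abs_of_nonneg hR]
          rw [this]
  -- contour shift: the integral over ℝ equals the integral over the line Im = -R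
  have hshift : ∀ R : ℝ, 0 ≤ R →
      (∫ x : ℝ, f ((x : ℂ) + ((0 : ℝ) : ℂ) * I)) = ∫ x : ℝ, f ((x : ℂ) + ((-R : ℝ) : ℂ) * I) := by
    intro R hR
    have hbot : Tendsto (fun A : ℝ => ∫ x in -A..A, f ((x : ℂ) + ((-R : ℝ) : ℂ) * I)) atTop
        (nhds (∫ x : ℝ, f ((x : ℂ) + ((-R : ℝ) : ℂ) * I))) :=
      intervalIntegral_tendsto_integral (hInt (-R) (by linarith)) tendsto_neg_atTop_atBot
        tendsto_id
    have htop : Tendsto (fun A : ℝ => ∫ x in -A..A, f ((x : ℂ) + ((0 : ℝ) : ℂ) * I)) atTop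
        (nhds (∫ x : ℝ, f ((x : ℂ) + ((0 : ℝ) : ℂ) * I))) :=
      intervalIntegral_tendsto_integral (hInt 0 le_rfl) tendsto_neg_atTop_atBot tendsto_id
    have hB : Tendsto (fun A : ℝ => C * ((1 + |A|) ^ 2)⁻¹ * R) atTop (nhds 0) := by
      have h1 : Tendsto (fun A : ℝ => (1 + |A|) ^ 2) atTop atTop :=
        (tendsto_pow_atTop two_ne_zero).comp
          (tendsto_atTop_add_const_left _ 1 tendsto_abs_atTop_atTop)
      have h2 := (tendsto_inv_atTop_zero.comp h1).const_mul C
      simpa using h2.mul_const R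
    have hs1 : Tendsto (fun A : ℝ => I • ∫ y in (-R)..0, f ((A : ℂ) + (y : ℂ) * I)) atTop
        (nhds 0) := by
      rw [show (0 : ℂ) = I • 0 from by simp]
      exact (squeeze_zero_norm (fun A => hside R hR A) hB).const_smul I
    have hs2 : Tendsto (fun A : ℝ => I • ∫ y in (-R)..0, f (((-A : ℝ) : ℂ) + (y : ℂ) * I)) atTop
        (nhds 0) := by
      rw [show (0 : ℂ) = I • 0 from by simp]
      refine (squeeze_zero_norm (fun A => ?_) hB).const_smul I
      have := hside R hR (-A)
      simpa [abs_neg] using this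
    have hT := ((hbot.sub htop).add hs1).sub hs2
    have hZ : Tendsto (fun A : ℝ =>
        (∫ x in -A..A, f ((x : ℂ) + ((-R : ℝ) : ℂ) * I))
          - (∫ x in -A..A, f ((x : ℂ) + ((0 : ℝ) : ℂ) * I))
          + I • (∫ y in (-R)..0, f ((A : ℂ) + (y : ℂ) * I))
          - I • (∫ y in (-R)..0, f (((-A : ℝ) : ℂ) + (y : ℂ) * I))) atTop (nhds 0) :=
      Tendsto.congr (fun A => (hrect A R hR).symm) tendsto_const_nhds
    have hu := tendsto_nhds_unique hT hZ
    have : (∫ x : ℝ, f ((x : ℂ) + ((-R : ℝ) : ℂ) * I))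
        - (∫ x : ℝ, f ((x : ℂ) + ((0 : ℝ) : ℂ) * I)) = 0 := by
      simpa using hu
    exact (sub_eq_zero.mp this).symm
  -- uniform bound on the shifted integral
  have hπ : ∀ R : ℝ, 0 ≤ R →
      ‖∫ x : ℝ, f ((x : ℂ) + ((0 : ℝ) : ℂ) * I)‖ ≤ Real.exp (t * R) * (C * Real.pi) := by
    intro R hR
    rw [hshift R hR]
    have hb := norm_integral_le_of_norm_le
      ((integrable_inv_one_add_sq.const_mul C).const_mul (Real.exp (-(t * -R))))
      (Filter.Eventually.of_forall fun x : ℝ => hbound x (-R) (by linarith))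
    refine hb.trans (le_of_eq ?_)
    rw [MeasureTheory.integral_const_mul, MeasureTheory.integral_const_mul,
      integral_univ_inv_one_add_sq]
    have : -(t * -R) = t * R := by ring
    rw [this]
  -- let R → ∞
  have hlim : Tendsto (fun R : ℝ => Real.exp (t * R) * (C * Real.pi)) atTop (nhds 0) := by
    have h1 : Tendsto (fun R : ℝ => t * R) atTop atBot :=
      tendsto_id.const_mul_atTop_of_neg ht
    simpa using (Real.tendsto_exp_atBot.comp h1).mul_const (C * Real.pi)
  have hfin : ‖∫ x : ℝ, f ((x : ℂ) + ((0 : ℝ) : ℂ) * I)‖ ≤ 0 :=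
    ge_of_tendsto hlim (eventually_atTop.mpr ⟨0, fun R hR => hπ R hR⟩)
  have hzero : (∫ x : ℝ, f ((x : ℂ) + ((0 : ℝ) : ℂ) * I)) = 0 := norm_le_zero_iff.mp hfin
  have heq : (fun τ : ℝ => Complex.exp (Complex.I * (t : ℂ) * (τ : ℂ)) * v (τ : ℂ))
      = fun x : ℝ => f ((x : ℂ) + ((0 : ℝ) : ℂ) * I) := by
    funext x
    rw [hfdef]
    norm_num
  rw [heq]
  exact hzero
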